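/- arXiv:1806.10045 — 2 statements merged into one kernel-verified Lean document; each statement's English description precedes it below -/
import Mathlib

section
/- Suppose ⟨f, {g_s}⟩ is an MDP homomorphism from M onto M' with each g_s surjective. Then for any ε ≥ 0 and any ε-optimal policy π' for M' (i.e., Q'*(s', π'(s')) ≥ V'*(s') − ε for all s'), any lifted policy π with g_s(π(s)) = π'(f(s)) satisfies Q*(s, π(s)) ≥ V*(s) − ε for all s ∈ S. -/
/-!
Lifting along the homomorphism turns `Q'*` into the function `(s, a) ↦ Q'*(f s, g_s a)`.
Since `g_s` is onto, its maximum over `a` is `V'*(f s)`, and since `T` pushes forward to `T'`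
along `f`, the lifted function is again a fixed point of the Bellman operator of `M`. That
operator is a `γ`-contraction for the sup metric, so the lift equals `Q*`; in particular
`V*(s) = V'*(f s)` and `Q*(s, π s) = Q'*(f s, π' (f s))`, and ε-optimality transfers.
-/

open Finset
open scoped Classical

/-- Bellman optimality operator for a finite MDP. -/
noncomputable def Bop {S A : Type*} [Fintype S] [Fintype A] [Nonempty A]
    (T : S → A → S → ℝ) (R : S → A → ℝ) (γ : ℝ) (Q : S → A → ℝ) : S → A → ℝ :=
  fun s a => R s a + γ * ∑ s' : S, T s a s' *
    (Finset.univ.sup' Finset.univ_nonempty (fun a' => Q s' a'))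

lemma sup'_comp_of_surjective {A A' : Type*} [Fintype A] [Fintype A'] [Nonempty A]
    [Nonempty A'] {g : A → A'} (hg : Function.Surjective g) (h : A' → ℝ) :
    univ.sup' univ_nonempty (fun a => h (g a)) = univ.sup' univ_nonempty h := by
  refine le_antisymm (sup'_le _ _ fun a _ => le_sup' h (mem_univ (g a)))
    (sup'_le _ _ fun a' _ => ?_)
  obtain ⟨a, rfl⟩ := hg a'
  exact le_sup' (fun a => h (g a)) (mem_univ a)

lemma sup'_le_sup'_add {A : Type*} [Fintype A] [Nonempty A] {u v : A → ℝ} {M : ℝ}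
    (h : ∀ a, u a ≤ v a + M) :
    univ.sup' univ_nonempty u ≤ univ.sup' univ_nonempty v + M :=
  sup'_le _ _ fun a _ => (h a).trans (add_le_add_left (le_sup' v (mem_univ a)) M)

lemma abs_sup'_sub_sup'_le {A : Type*} [Fintype A] [Nonempty A] {u v : A → ℝ} {M : ℝ}
    (h : ∀ a, |u a - v a| ≤ M) :
    |univ.sup' univ_nonempty u - univ.sup' univ_nonempty v| ≤ M := by
  rw [abs_sub_le_iff, sub_le_iff_le_add', sub_le_iff_le_add']
  exact ⟨sup'_le_sup'_add fun a => by linarith [(abs_le.mp (h a)).2],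
    sup'_le_sup'_add fun a => by linarith [(abs_le.mp (h a)).1]⟩

lemma sum_mul_comp_eq_sum_fiber_mul {S S' : Type*} [Fintype S] [Fintype S']
    (p : S → ℝ) (f : S → S') (V : S' → ℝ) :
    ∑ x, p x * V (f x) = ∑ y, (∑ x ∈ univ.filter (fun x => f x = y), p x) * V y := by
  rw [← sum_fiberwise univ f]
  refine sum_congr rfl fun y _ => ?_
  rw [sum_mul]
  exact sum_congr rfl fun x hx => by rw [(mem_filter.mp hx).2]

section Bellman

variable {S A : Type*} [Fintype S] [Fintype A] [Nonempty A]
  {T : S → A → S → ℝ} {R : S → A → ℝ} {γ : ℝ}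

lemma dist_Bop_le (hγ0 : 0 ≤ γ) (hTnn : ∀ s a s'', 0 ≤ T s a s'')
    (hTsum : ∀ s a, ∑ s'' : S, T s a s'' = 1) (Q₁ Q₂ : S → A → ℝ) :
    dist (Bop T R γ Q₁) (Bop T R γ Q₂) ≤ γ * dist Q₁ Q₂ := by
  have hr : 0 ≤ γ * dist Q₁ Q₂ := mul_nonneg hγ0 dist_nonneg
  refine (dist_pi_le_iff hr).2 fun s => (dist_pi_le_iff hr).2 fun a => ?_
  have hV : ∀ s'', |univ.sup' univ_nonempty (Q₁ s'') - univ.sup' univ_nonempty (Q₂ s'')|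
      ≤ dist Q₁ Q₂ := fun s'' => abs_sup'_sub_sup'_le fun a' =>
    (dist_le_pi_dist (Q₁ s'') (Q₂ s'') a').trans (dist_le_pi_dist Q₁ Q₂ s'')
  simp only [Bop, Real.dist_eq, add_sub_add_left_eq_sub, ← mul_sub, ← sum_sub_distrib,
    abs_mul, abs_of_nonneg hγ0]
  gcongr
  calc |∑ s'', T s a s'' * (univ.sup' univ_nonempty (Q₁ s'')
          - univ.sup' univ_nonempty (Q₂ s''))|
      ≤ ∑ s'', T s a s'' * dist Q₁ Q₂ := by
        refine (abs_sum_le_sum_abs _ _).trans (sum_le_sum fun s'' _ => ?_)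
        rw [abs_mul, abs_of_nonneg (hTnn s a s'')]
        exact mul_le_mul_of_nonneg_left (hV s'') (hTnn s a s'')
    _ = dist Q₁ Q₂ := by rw [← sum_mul, hTsum, one_mul]

lemma Bop_fixedPoint_unique (hγ0 : 0 ≤ γ) (hγ1 : γ < 1) (hTnn : ∀ s a s'', 0 ≤ T s a s'')
    (hTsum : ∀ s a, ∑ s'' : S, T s a s'' = 1) {Q₁ Q₂ : S → A → ℝ}
    (h₁ : Bop T R γ Q₁ = Q₁) (h₂ : Bop T R γ Q₂ = Q₂) : Q₁ = Q₂ := by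
  have h := dist_Bop_le (R := R) hγ0 hTnn hTsum Q₁ Q₂
  rw [h₁, h₂] at h
  exact dist_le_zero.mp (by nlinarith [dist_nonneg (x := Q₁) (y := Q₂)])

end Bellman

lemma Bop_lift {S A S' A' : Type*} [Fintype S] [Fintype A] [Fintype S'] [Fintype A']
    [Nonempty A] [Nonempty A'] {T : S → A → S → ℝ} {R : S → A → ℝ}
    {T' : S' → A' → S' → ℝ} {R' : S' → A' → ℝ} (γ : ℝ) {f : S → S'} {g : S → A → A'}
    (hgsurj : ∀ s, Function.Surjective (g s))
    (hT : ∀ s a s', T' (f s) (g s a) s' = ∑ x ∈ univ.filter (fun x => f x = s'), T s a x)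
    (hR : ∀ s a, R' (f s) (g s a) = R s a) (Q' : S' → A' → ℝ) :
    Bop T R γ (fun s a => Q' (f s) (g s a)) = fun s a => Bop T' R' γ Q' (f s) (g s a) := by
  funext s a
  simp only [Bop, hR, hT, sup'_comp_of_surjective (hgsurj _)]
  rw [sum_mul_comp_eq_sum_fiber_mul (T s a) f (fun s' => univ.sup' univ_nonempty (Q' s'))]

theorem lifted_policy_eps_optimal_general
    {S A S' A' : Type*} [Fintype S] [Fintype A] [Fintype S'] [Fintype A']
    [Nonempty A] [Nonempty A']
    (T : S → A → S → ℝ) (R : S → A → ℝ)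
    (T' : S' → A' → S' → ℝ) (R' : S' → A' → ℝ)
    (γ : ℝ) (hγ0 : 0 ≤ γ) (hγ1 : γ < 1)
    (hTnn : ∀ s a s'', 0 ≤ T s a s'') (hTsum : ∀ s a, ∑ s'' : S, T s a s'' = 1)
    (f : S → S') (g : S → A → A')
    (hgsurj : ∀ s, Function.Surjective (g s))
    (hT : ∀ s a s', T' (f s) (g s a) s' = ∑ x ∈ Finset.univ.filter (fun x => f x = s'), T s a x)
    (hR : ∀ s a, R' (f s) (g s a) = R s a)
    (Qstar : S → A → ℝ) (hQstar : Bop T R γ Qstar = Qstar)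
    (Q'star : S' → A' → ℝ) (hQ'star : Bop T' R' γ Q'star = Q'star)
    (ε : ℝ)
    (π' : S' → A')
    (hπ' : ∀ s', Q'star s' (π' s') ≥
      Finset.univ.sup' Finset.univ_nonempty (fun a' => Q'star s' a') - ε)
    (π : S → A) (hlift : ∀ s, g s (π s) = π' (f s)) :
    ∀ s, Qstar s (π s) ≥
      Finset.univ.sup' Finset.univ_nonempty (fun a => Qstar s a) - ε := by
  have hQ : Qstar = fun s a => Q'star (f s) (g s a) :=
    Bop_fixedPoint_unique hγ0 hγ1 hTnn hTsum hQstar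
      ((Bop_lift γ hgsurj hT hR Q'star).trans (by rw [hQ'star]))
  intro s
  simpa only [hQ, hlift, sup'_comp_of_surjective (hgsurj s)] using hπ' (f s)

/-- An ε-optimal policy for the abstract MDP lifts through an MDP homomorphism to an
ε-optimal policy for the underlying MDP. -/
theorem lifted_policy_eps_optimal
    {S A S' A' : Type*} [Fintype S] [Fintype A] [Fintype S'] [Fintype A']
    [Nonempty S] [Nonempty A] [Nonempty S'] [Nonempty A']
    (T : S → A → S → ℝ) (R : S → A → ℝ)
    (T' : S' → A' → S' → ℝ) (R' : S' → A' → ℝ)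
    (γ : ℝ) (hγ0 : 0 ≤ γ) (hγ1 : γ < 1)
    (hTnn : ∀ s a s'', 0 ≤ T s a s'') (hTsum : ∀ s a, ∑ s'' : S, T s a s'' = 1)
    (hT'nn : ∀ s a s'', 0 ≤ T' s a s'') (hT'sum : ∀ s a, ∑ s'' : S', T' s a s'' = 1)
    (f : S → S') (g : S → A → A')
    (hfsurj : Function.Surjective f) (hgsurj : ∀ s, Function.Surjective (g s))
    (hT : ∀ s a s', T' (f s) (g s a) s' = ∑ x ∈ Finset.univ.filter (fun x => f x = s'), T s a x)
    (hR : ∀ s a, R' (f s) (g s a) = R s a)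
    (Qstar : S → A → ℝ) (hQstar : Bop T R γ Qstar = Qstar)
    (Q'star : S' → A' → ℝ) (hQ'star : Bop T' R' γ Q'star = Q'star)
    (ε : ℝ) (hε : 0 ≤ ε)
    (π' : S' → A')
    (hπ' : ∀ s', Q'star s' (π' s') ≥
      Finset.univ.sup' Finset.univ_nonempty (fun a' => Q'star s' a') - ε)
    (π : S → A) (hlift : ∀ s, g s (π s) = π' (f s)) :
    ∀ s, Qstar s (π s) ≥
      Finset.univ.sup' Finset.univ_nonempty (fun a => Qstar s a) - ε :=
  lifted_policy_eps_optimal_general T R T' R' γ hγ0 hγ1 hTnn hTsum f g hgsurj hT hR Qstar hQstar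
    Q'star hQ'star ε π' hπ' π hlift
end

section
/- For a finite MDP and γ ∈ [0,1), the optimal Q-function Q* is the supremum-norm limit of value iteration: for any initial Q₀, the iterates Qₙ₊₁ = B Qₙ under the Bellman optimality operator B satisfy ‖Qₙ − Q*‖ ≤ γⁿ ‖Q₀ − Q*‖; consequently, if ⟨f,{g_s}⟩ is an MDP homomorphism and Q'₀ is pulled back to Q₀(s,a) = Q'₀(f(s),g_s(a)), then every value-iteration iterate in M equals the pullback of the corresponding iterate in M'. -/
open Finset
open scoped Classical

/-- Supremum norm of a Q-function on a finite MDP. -/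
noncomputable def supNorm {S A : Type*} [Fintype S] [Fintype A] [Nonempty S] [Nonempty A]
    (Q : S → A → ℝ) : ℝ :=
  Finset.univ.sup' Finset.univ_nonempty (fun p : S × A => |Q p.1 p.2|)

/-! The iterates of a `γ`-Lipschitz operator approach each of its fixed points geometrically; the
Bellman operator is such an operator because `max` is 1-Lipschitz in the sup norm and a
stochastic average does not increase it. Along a homomorphism, the inner maximum over the actions
of `M` equals the maximum over the actions of `M'` (by surjectivity of `g s`), and collecting the
transition weights along the fibres of `f` turns the expectation in `M` into the one in `M'`, so
pulling back intertwines the two Bellman operators. -/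

lemma Finset.abs_sup'_sub_sup'_le {ι : Type*} {s : Finset ι} (hs : s.Nonempty) {f g : ι → ℝ}
    {B : ℝ} (h : ∀ i ∈ s, |f i - g i| ≤ B) : |s.sup' hs f - s.sup' hs g| ≤ B := by
  rw [abs_sub_le_iff]
  constructor
  · obtain ⟨i, hi, hfi⟩ := exists_mem_eq_sup' hs f
    linarith [le_sup' g hi, (abs_le.mp (h i hi)).2]
  · obtain ⟨i, hi, hgi⟩ := exists_mem_eq_sup' hs g
    linarith [le_sup' f hi, (abs_le.mp (h i hi)).1]

lemma Finset.univ_sup'_comp_of_surjective {ι κ α : Type*} [Fintype ι] [Fintype κ] [Nonempty ι]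
    [Nonempty κ] [SemilatticeSup α] {g : ι → κ} (hg : Function.Surjective g) (v : κ → α) :
    univ.sup' univ_nonempty (v ∘ g) = univ.sup' univ_nonempty v := by
  rw [sup'_comp_eq_image]
  exact sup'_congr _ (image_univ_of_surjective hg) fun _ _ => rfl

lemma abs_sum_mul_le_of_stochastic {ι : Type*} [Fintype ι] {w v : ι → ℝ} {B : ℝ}
    (hw : ∀ i, 0 ≤ w i) (hw1 : ∑ i, w i = 1) (hv : ∀ i, |v i| ≤ B) : |∑ i, w i * v i| ≤ B :=
  calc |∑ i, w i * v i| ≤ ∑ i, |w i * v i| := abs_sum_le_sum_abs _ _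
    _ ≤ ∑ i, w i * B := by
      gcongr with i
      rw [abs_mul, abs_of_nonneg (hw i)]
      exact mul_le_mul_of_nonneg_left (hv i) (hw i)
    _ = B := by rw [← sum_mul, hw1, one_mul]

lemma Finset.sum_mul_comp_eq_sum_fiberwise {ι κ R : Type*} [Fintype ι] [Fintype κ]
    [NonUnitalNonAssocSemiring R] (w : ι → R) (f : ι → κ) (v : κ → R) :
    ∑ i, w i * v (f i) = ∑ k, (∑ i ∈ univ.filter (fun i => f i = k), w i) * v k := by
  rw [← sum_fiberwise univ f fun i => w i * v (f i)]
  refine sum_congr rfl fun k _ => ?_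
  rw [sum_mul]
  exact sum_congr rfl fun i hi => by rw [(mem_filter.mp hi).2]

section SupNorm

variable {S A : Type*} [Fintype S] [Fintype A] [Nonempty S] [Nonempty A]

lemma abs_le_supNorm (Q : S → A → ℝ) (s : S) (a : A) : |Q s a| ≤ supNorm Q :=
  le_sup' (fun p : S × A => |Q p.1 p.2|) (mem_univ (s, a))

lemma supNorm_nonneg (Q : S → A → ℝ) : 0 ≤ supNorm Q :=
  (abs_nonneg _).trans (abs_le_supNorm Q (Classical.arbitrary S) (Classical.arbitrary A))

lemma supNorm_le {Q : S → A → ℝ} {c : ℝ} (h : ∀ s a, |Q s a| ≤ c) : supNorm Q ≤ c :=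
  sup'_le _ _ fun p _ => h p.1 p.2

lemma supNorm_iterate_sub_fixedPoint_le {F : (S → A → ℝ) → S → A → ℝ} {γ : ℝ} (hγ : 0 ≤ γ)
    (hF : ∀ Q₁ Q₂, supNorm (fun s a => F Q₁ s a - F Q₂ s a) ≤
      γ * supNorm (fun s a => Q₁ s a - Q₂ s a))
    {Qstar : S → A → ℝ} (hQstar : F Qstar = Qstar) (Q₀ : S → A → ℝ) (n : ℕ) :
    supNorm (fun s a => F^[n] Q₀ s a - Qstar s a) ≤
      γ ^ n * supNorm (fun s a => Q₀ s a - Qstar s a) := by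
  induction n with
  | zero => simp
  | succ n ih =>
    calc supNorm (fun s a => F^[n + 1] Q₀ s a - Qstar s a)
        = supNorm (fun s a => F (F^[n] Q₀) s a - F Qstar s a) := by
          rw [Function.iterate_succ_apply', hQstar]
      _ ≤ γ * supNorm (fun s a => F^[n] Q₀ s a - Qstar s a) := hF _ _
      _ ≤ γ * (γ ^ n * supNorm (fun s a => Q₀ s a - Qstar s a)) := by gcongr
      _ = γ ^ (n + 1) * supNorm (fun s a => Q₀ s a - Qstar s a) := by ring

lemma supNorm_Bop_sub_Bop_le (T : S → A → S → ℝ) (R : S → A → ℝ) {γ : ℝ} (hγ : 0 ≤ γ)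
    (hTnn : ∀ s a s', 0 ≤ T s a s') (hTsum : ∀ s a, ∑ s' : S, T s a s' = 1)
    (Q₁ Q₂ : S → A → ℝ) :
    supNorm (fun s a => Bop T R γ Q₁ s a - Bop T R γ Q₂ s a) ≤
      γ * supNorm (fun s a => Q₁ s a - Q₂ s a) := by
  refine supNorm_le fun s a => ?_
  have hmax : ∀ s', |univ.sup' univ_nonempty (Q₁ s') - univ.sup' univ_nonempty (Q₂ s')| ≤
      supNorm (fun s a => Q₁ s a - Q₂ s a) := fun s' =>
    abs_sup'_sub_sup'_le _ fun a' _ => abs_le_supNorm (fun s a => Q₁ s a - Q₂ s a) s' a'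
  have hdiff : Bop T R γ Q₁ s a - Bop T R γ Q₂ s a = γ * ∑ s', T s a s' *
      (univ.sup' univ_nonempty (Q₁ s') - univ.sup' univ_nonempty (Q₂ s')) := by
    simp only [Bop, mul_sub, sum_sub_distrib]
    ring
  rw [hdiff, abs_mul, abs_of_nonneg hγ]
  gcongr
  exact abs_sum_mul_le_of_stochastic (hTnn s a) (hTsum s a) hmax

end SupNorm

def pullbackQ {S A S' A' : Type*} (f : S → S') (g : S → A → A') (Q' : S' → A' → ℝ) :
    S → A → ℝ :=
  fun s a => Q' (f s) (g s a)

lemma semiconj_pullbackQ_Bop {S A S' A' : Type*} [Fintype S] [Fintype A] [Fintype S']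
    [Fintype A'] [Nonempty A] [Nonempty A'] {T : S → A → S → ℝ} {R : S → A → ℝ}
    {T' : S' → A' → S' → ℝ} {R' : S' → A' → ℝ} (γ : ℝ) {f : S → S'} {g : S → A → A'}
    (hgsurj : ∀ s, Function.Surjective (g s))
    (hT : ∀ s a s', T' (f s) (g s a) s' = ∑ x ∈ univ.filter (fun x => f x = s'), T s a x)
    (hR : ∀ s a, R' (f s) (g s a) = R s a) :
    Function.Semiconj (pullbackQ f g) (Bop T' R' γ) (Bop T R γ) := by
  intro Q'
  funext s a
  have hmax : ∀ x, univ.sup' univ_nonempty (fun a' => Q' (f x) (g x a')) =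
      univ.sup' univ_nonempty (Q' (f x)) := fun x =>
    univ_sup'_comp_of_surjective (hgsurj x) (Q' (f x))
  simp only [Bop, pullbackQ, hR, hmax]
  rw [sum_mul_comp_eq_sum_fiberwise (T s a) f fun t => univ.sup' univ_nonempty (Q' t)]
  simp only [hT]

theorem value_iteration_convergence_and_pullback_general
    {S A S' A' : Type*} [Fintype S] [Fintype A] [Fintype S'] [Fintype A']
    [Nonempty S] [Nonempty A] [Nonempty A']
    (T : S → A → S → ℝ) (R : S → A → ℝ)
    (T' : S' → A' → S' → ℝ) (R' : S' → A' → ℝ)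
    (γ : ℝ) (hγ0 : 0 ≤ γ)
    (hTnn : ∀ s a s'', 0 ≤ T s a s'') (hTsum : ∀ s a, ∑ s'' : S, T s a s'' = 1)
    (f : S → S') (g : S → A → A')
    (hgsurj : ∀ s, Function.Surjective (g s))
    (hT : ∀ s a s', T' (f s) (g s a) s' = ∑ x ∈ Finset.univ.filter (fun x => f x = s'), T s a x)
    (hR : ∀ s a, R' (f s) (g s a) = R s a)
    (Qstar : S → A → ℝ) (hQstar : Bop T R γ Qstar = Qstar) :
    (∀ (Q₀ : S → A → ℝ) (n : ℕ),
      supNorm (fun s a => (Bop T R γ)^[n] Q₀ s a - Qstar s a) ≤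
        γ ^ n * supNorm (fun s a => Q₀ s a - Qstar s a)) ∧
    (∀ (Q'₀ : S' → A' → ℝ) (n : ℕ) (s : S) (a : A),
      (Bop T R γ)^[n] (fun s a => Q'₀ (f s) (g s a)) s a =
        (Bop T' R' γ)^[n] Q'₀ (f s) (g s a)) := by
  refine ⟨supNorm_iterate_sub_fixedPoint_le hγ0 (supNorm_Bop_sub_Bop_le T R hγ0 hTnn hTsum) hQstar,
    fun Q'₀ n s a => ?_⟩
  have hcomm := (semiconj_pullbackQ_Bop γ hgsurj hT hR).iterate_right n Q'₀
  exact (congr_fun₂ hcomm s a).symm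

/-- Value iteration converges geometrically to `Q*`; moreover, along an MDP homomorphism,
every value-iteration iterate in `M` starting from the pullback of `Q'₀` equals the pullback
of the corresponding iterate in `M'`. -/
theorem value_iteration_convergence_and_pullback
    {S A S' A' : Type*} [Fintype S] [Fintype A] [Fintype S'] [Fintype A']
    [Nonempty S] [Nonempty A] [Nonempty S'] [Nonempty A']
    (T : S → A → S → ℝ) (R : S → A → ℝ)
    (T' : S' → A' → S' → ℝ) (R' : S' → A' → ℝ)
    (γ : ℝ) (hγ0 : 0 ≤ γ) (hγ1 : γ < 1)
    (hTnn : ∀ s a s'', 0 ≤ T s a s'') (hTsum : ∀ s a, ∑ s'' : S, T s a s'' = 1)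
    (f : S → S') (g : S → A → A')
    (hfsurj : Function.Surjective f) (hgsurj : ∀ s, Function.Surjective (g s))
    (hT : ∀ s a s', T' (f s) (g s a) s' = ∑ x ∈ Finset.univ.filter (fun x => f x = s'), T s a x)
    (hR : ∀ s a, R' (f s) (g s a) = R s a)
    (Qstar : S → A → ℝ) (hQstar : Bop T R γ Qstar = Qstar) :
    (∀ (Q₀ : S → A → ℝ) (n : ℕ),
      supNorm (fun s a => (Bop T R γ)^[n] Q₀ s a - Qstar s a) ≤
        γ ^ n * supNorm (fun s a => Q₀ s a - Qstar s a)) ∧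
    (∀ (Q'₀ : S' → A' → ℝ) (n : ℕ) (s : S) (a : A),
      (Bop T R γ)^[n] (fun s a => Q'₀ (f s) (g s a)) s a =
        (Bop T' R' γ)^[n] Q'₀ (f s) (g s a)) :=
  value_iteration_convergence_and_pullback_general T R T' R' γ hγ0 hTnn hTsum f g hgsurj hT hR Qstar
    hQstar
end
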